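/- Let Λ ⊂ ℤ and f ∈ H_Λ with ‖f‖₂ = 1, and set F = |f|². Then for any finite interval J of integers, Σ_{n∈J} |F̂(n)| ≤ D_Λ(|J|), where F̂(n) is the n-th Fourier coefficient of F and D_Λ(x) = sup_{t∈ℝ}|Λ ∩ [t,t+x]|. -/

import Mathlib

open MeasureTheory Complex
open scoped ENNReal Real

instance : Fact ((0:ℝ) < 1) := ⟨one_pos⟩

/-- Haar (Lebesgue) probability measure on the circle `𝕋 = ℝ/ℤ`. -/
noncomputable def μT : Measure (AddCircle (1:ℝ)) := AddCircle.haarAddCircle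

/-- `H_Λ`: the closed linear span in `L²(𝕋)` of the characters `e^{2πinξ}`, `n ∈ Λ`. -/
noncomputable def HLam (Λ : Set ℤ) : Submodule ℂ (Lp ℂ 2 μT) :=
  (Submodule.span ℂ ((fun n : ℤ => (fourierLp 2 n : Lp ℂ 2 μT)) '' Λ)).topologicalClosure

/-- `D_Λ(x) = sup_{t∈ℝ} |Λ ∩ [t, t+x]|` for `Λ ⊆ ℤ` (as an extended count). -/
noncomputable def DLamZ (Λ : Set ℤ) (x : ℝ) : ℝ≥0∞ :=
  ⨆ t : ℝ, (((fun n : ℤ => (n : ℝ)) '' Λ ∩ Set.Icc t (t + x)).encard : ℝ≥0∞)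

/-!
By Parseval, `F̂(n) = ⟪f, e₋ₙ f⟫ = ∑ₘ conj (f̂ m) * f̂ (m + n)`, and `f̂` vanishes off `Λ`.
AM–GM, symmetrised, gives `2 |f̂ m| |f̂ (m + n)| ≤ 1_Λ(m + n) |f̂ m|² + 1_Λ(m) |f̂ (m + n)|²`.
Summing over `n ∈ J`, the weight `|f̂ m|²` is counted `#(Λ ∩ (m + J))` times by the first term
and `#(Λ ∩ (m - J))` times by the second; both counts are at most `D_Λ(|J|)`, and
`∑ₘ |f̂ m|² = ‖f‖² = 1`. All sums are taken in `ℝ≥0∞`, so no summability bookkeeping is needed.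
-/

open scoped ComplexConjugate InnerProductSpace NNReal

section Fourier

variable {T : ℝ} [Fact (0 < T)]

open AddCircle

theorem hasSum_conj_fourierCoeff_mul_fourierCoeff (f g : Lp ℂ 2 (haarAddCircle (T := T))) :
    HasSum (fun i => conj (fourierCoeff f i) * fourierCoeff g i) ⟪f, g⟫_ℂ := by
  have h (i : ℤ) : ⟪f, fourierBasis i⟫_ℂ * ⟪fourierBasis i, g⟫_ℂ =
      conj (fourierCoeff f i) * fourierCoeff g i := by
    rw [← inner_conj_symm, ← fourierBasis.repr_apply_apply, ← fourierBasis.repr_apply_apply,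
      fourierBasis_repr, fourierBasis_repr]
  simpa only [h] using fourierBasis.hasSum_inner_mul_inner f g

theorem tsum_enorm_fourierCoeff_sq (f : Lp ℂ 2 (haarAddCircle (T := T))) :
    ∑' i, ‖fourierCoeff f i‖ₑ ^ 2 = ‖f‖ₑ ^ 2 := by
  have h : HasSum (fun i => ‖fourierCoeff f i‖₊ ^ 2) (‖f‖₊ ^ 2) := by
    rw [← NNReal.hasSum_coe]
    simp_rw [← fourierBasis_repr]
    push_cast
    simpa using lp.hasSum_norm (p := 2) (by simp) (fourierBasis.repr f)
  simp only [enorm, ← ENNReal.coe_pow, ← ENNReal.coe_tsum h.summable, h.tsum_eq]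

theorem fourierCoeff_fourierLp_smul (n : ℤ) (g : Lp ℂ 2 (haarAddCircle (T := T))) (m : ℤ) :
    fourierCoeff ((fourierLp (T := T) ∞ n • g : Lp ℂ 2 haarAddCircle) : AddCircle T → ℂ) m =
      fourierCoeff g (m - n) := by
  unfold fourierCoeff
  apply integral_congr_ae
  filter_upwards [Lp.coeFn_lpSMul (r := 2) (fourierLp (T := T) ∞ n) g,
    coeFn_fourierLp (T := T) ∞ n] with x hx hn
  rw [hx, Pi.smul_apply', hn, smul_eq_mul, smul_eq_mul, smul_eq_mul, ← mul_assoc, ← fourier_add,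
    neg_sub, sub_eq_neg_add]

theorem inner_fourierLp_smul_self (f : Lp ℂ 2 (haarAddCircle (T := T))) (n : ℤ) :
    ⟪f, (fourierLp (T := T) ∞ (-n) • f : Lp ℂ 2 haarAddCircle)⟫_ℂ =
      fourierCoeff (fun x => ((‖f x‖ ^ 2 : ℝ) : ℂ)) n := by
  rw [L2.inner_def]
  apply integral_congr_ae
  filter_upwards [Lp.coeFn_lpSMul (r := 2) (fourierLp (T := T) ∞ (-n)) f,
    coeFn_fourierLp (T := T) ∞ (-n)] with x hx hn
  rw [hx, Pi.smul_apply', hn, RCLike.inner_apply, smul_eq_mul, smul_eq_mul, mul_assoc,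
    Complex.mul_conj', Complex.ofReal_pow]

theorem enorm_fourierCoeff_normSq_le (f : Lp ℂ 2 (haarAddCircle (T := T))) (n : ℤ) :
    ‖fourierCoeff (fun x => ((‖f x‖ ^ 2 : ℝ) : ℂ)) n‖ₑ ≤
      ∑' m, ‖fourierCoeff f m‖ₑ * ‖fourierCoeff f (m + n)‖ₑ := by
  have h := hasSum_conj_fourierCoeff_mul_fourierCoeff f (fourierLp (T := T) ∞ (-n) • f)
  simp only [fourierCoeff_fourierLp_smul, sub_neg_eq_add, inner_fourierLp_smul_self] at h
  rw [← h.tsum_eq]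
  refine enorm_tsum_le_tsum_enorm.trans_eq ?_
  simp

theorem fourierCoeff_eq_zero_of_mem_closure_span {Λ : Set ℤ}
    {f : Lp ℂ 2 (haarAddCircle (T := T))}
    (hf : f ∈ (Submodule.span ℂ (fourierLp 2 '' Λ)).topologicalClosure) {k : ℤ} (hk : k ∉ Λ) :
    fourierCoeff f k = 0 := by
  have hle : (Submodule.span ℂ (fourierLp 2 '' Λ)).topologicalClosure ≤
      (ℂ ∙ fourierBasis (T := T) k)ᗮ := by
    refine Submodule.topologicalClosure_minimal _ (Submodule.span_le.mpr ?_)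
      (Submodule.isClosed_orthogonal _)
    rintro _ ⟨n, hn, rfl⟩
    rw [SetLike.mem_coe, Submodule.mem_orthogonal_singleton_iff_inner_right, ← coe_fourierBasis]
    exact fourierBasis.orthonormal.2 (ne_of_mem_of_not_mem hn hk).symm
  have h := Submodule.mem_orthogonal_singleton_iff_inner_right.mp (hle hf)
  rwa [← fourierBasis.repr_apply_apply, fourierBasis_repr] at h

end Fourier

section Density

open Classical

theorem encard_le_DLamZ {Λ S : Set ℤ} (hS : S ⊆ Λ) {t x : ℝ}
    (h : ∀ n ∈ S, (n : ℝ) ∈ Set.Icc t (t + x)) : (S.encard : ℝ≥0∞) ≤ DLamZ Λ x := by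
  refine le_trans ?_ (le_iSup _ t)
  rw [← (Int.cast_injective (α := ℝ)).injOn.encard_image]
  gcongr
  rintro _ ⟨n, hn, rfl⟩
  exact ⟨⟨n, hS hn, rfl⟩, h n hn⟩

theorem card_filter_add_mem_le_DLamZ (Λ : Set ℤ) (m a b : ℤ) :
    (((Finset.Icc a b).filter (m + · ∈ Λ)).card : ℝ≥0∞) ≤
      DLamZ Λ ((Finset.Icc a b).card : ℝ) := by
  have hlen : (b : ℝ) - a ≤ (Finset.Icc a b).card := by
    rw [Int.card_Icc]
    exact_mod_cast (show b - a ≤ b + 1 - a by omega).trans (Int.self_le_toNat _)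
  have hS : ((m + ·) '' ((Finset.Icc a b).filter (m + · ∈ Λ))).encard =
      ((Finset.Icc a b).filter (m + · ∈ Λ)).card := by
    rw [(add_right_injective m).injOn.encard_image, Set.encard_coe_eq_coe_finsetCard]
  rw [← ENat.toENNReal_coe, ← hS]
  refine encard_le_DLamZ ?_ (t := m + a) ?_
  · rintro _ ⟨n, hn, rfl⟩
    exact (Finset.mem_filter.mp hn).2
  · rintro _ ⟨n, hn, rfl⟩
    obtain ⟨han, hnb⟩ := Finset.mem_Icc.mp (Finset.mem_filter.mp hn).1
    have : (a : ℝ) ≤ n := by exact_mod_cast han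
    have : (n : ℝ) ≤ b := by exact_mod_cast hnb
    push_cast
    constructor <;> linarith

theorem sum_Icc_tsum_ite_add_mem_le (Λ : Set ℤ) (w : ℤ → ℝ≥0∞) (a b : ℤ) :
    ∑ n ∈ Finset.Icc a b, ∑' m, (if m + n ∈ Λ then w m else 0) ≤
      DLamZ Λ ((Finset.Icc a b).card : ℝ) * ∑' m, w m := by
  rw [← ENNReal.tsum_mul_left, ← Summable.tsum_finsetSum fun _ _ => ENNReal.summable]
  refine ENNReal.tsum_le_tsum fun m => ?_
  rw [← Finset.sum_filter, Finset.sum_const, nsmul_eq_mul]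
  gcongr
  exact card_filter_add_mem_le_DLamZ Λ m a b

theorem two_mul_tsum_mul_shift_le {Λ : Set ℤ} {u : ℤ → ℝ≥0} (hu : ∀ m ∉ Λ, u m = 0) (n : ℤ) :
    2 * ∑' m, (u m : ℝ≥0∞) * u (m + n) ≤
      ∑' m, (if m + n ∈ Λ then (u m : ℝ≥0∞) ^ 2 else 0) +
        ∑' m, (if m + -n ∈ Λ then (u m : ℝ≥0∞) ^ 2 else 0) := by
  have hshift : ∑' m, (if m + -n ∈ Λ then (u m : ℝ≥0∞) ^ 2 else 0) =
      ∑' m, (if m ∈ Λ then (u (m + n) : ℝ≥0∞) ^ 2 else 0) := by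
    rw [← (Equiv.addRight n).tsum_eq]
    simp only [Equiv.coe_addRight, add_neg_cancel_right]
  rw [hshift, ← ENNReal.tsum_mul_left, ← ENNReal.tsum_add]
  refine ENNReal.tsum_le_tsum fun m => ?_
  by_cases hm : m ∈ Λ
  · by_cases hmn : m + n ∈ Λ
    · simp only [if_pos hm, if_pos hmn, ← mul_assoc]
      exact_mod_cast two_mul_le_add_sq (u m) (u (m + n))
    · simp [hu _ hmn]
  · simp [hu _ hm]

theorem sum_Icc_tsum_mul_shift_le {Λ : Set ℤ} {u : ℤ → ℝ≥0} (hu : ∀ m ∉ Λ, u m = 0) (a b : ℤ) :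
    ∑ n ∈ Finset.Icc a b, ∑' m, (u m : ℝ≥0∞) * u (m + n) ≤
      DLamZ Λ ((Finset.Icc a b).card : ℝ) * ∑' m, (u m : ℝ≥0∞) ^ 2 := by
  set B := DLamZ Λ ((Finset.Icc a b).card : ℝ) * ∑' m, (u m : ℝ≥0∞) ^ 2
  have hcard : (Finset.Icc (-b) (-a)).card = (Finset.Icc a b).card := by
    simp only [Int.card_Icc]
    congr 1
    ring
  have hneg : ∑ n ∈ Finset.Icc a b, ∑' m, (if m + -n ∈ Λ then (u m : ℝ≥0∞) ^ 2 else 0) =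
      ∑ n ∈ Finset.Icc (-b) (-a), ∑' m, (if m + n ∈ Λ then (u m : ℝ≥0∞) ^ 2 else 0) :=
    Finset.sum_nbij' Neg.neg Neg.neg (by simp; omega) (by simp; omega) (by simp) (by simp)
      (by simp)
  refine (ENNReal.mul_le_mul_iff_right two_ne_zero ENNReal.ofNat_ne_top).mp ?_
  calc 2 * ∑ n ∈ Finset.Icc a b, ∑' m, (u m : ℝ≥0∞) * u (m + n)
      ≤ ∑ n ∈ Finset.Icc a b, (∑' m, (if m + n ∈ Λ then (u m : ℝ≥0∞) ^ 2 else 0) +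
          ∑' m, (if m + -n ∈ Λ then (u m : ℝ≥0∞) ^ 2 else 0)) := by
        rw [Finset.mul_sum]
        exact Finset.sum_le_sum fun n _ => two_mul_tsum_mul_shift_le hu n
    _ ≤ B + B := by
        rw [Finset.sum_add_distrib, hneg]
        gcongr
        · exact sum_Icc_tsum_ite_add_mem_le Λ _ a b
        · simpa only [hcard] using sum_Icc_tsum_ite_add_mem_le Λ _ (-b) (-a)
    _ = 2 * B := (two_mul B).symm

end Density

/-- Lemma 4.2: for `f ∈ H_Λ` with `‖f‖ = 1` and `F = |f|²`, for any finite interval `J`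
of integers, `Σ_{n∈J} |F̂(n)| ≤ D_Λ(|J|)`. -/
theorem sum_abs_fourierCoeff_le_density
    (Λ : Set ℤ) (f : Lp ℂ 2 μT) (hf : f ∈ HLam Λ) (hnorm : ‖f‖ = 1)
    (a b : ℤ) :
    ENNReal.ofReal
        (∑ n ∈ Finset.Icc a b,
          ‖fourierCoeff (fun ξ : AddCircle (1:ℝ) => ((‖f ξ‖ ^ 2 : ℝ) : ℂ)) n‖) ≤
      DLamZ Λ ((Finset.Icc a b).card : ℝ) := by
  have hsupp : ∀ m ∉ Λ, ‖fourierCoeff f m‖₊ = 0 := fun m hm =>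
    nnnorm_eq_zero.mpr (fourierCoeff_eq_zero_of_mem_closure_span (T := 1) hf hm)
  have hparseval : ∑' m, ‖fourierCoeff f m‖ₑ ^ 2 = 1 := by
    have h1 : ‖f‖ₑ ^ 2 = 1 := by rw [← ofReal_norm, hnorm, ENNReal.ofReal_one, one_pow]
    exact (tsum_enorm_fourierCoeff_sq (T := 1) f).trans h1
  calc ENNReal.ofReal (∑ n ∈ Finset.Icc a b, ‖fourierCoeff (fun ξ => ((‖f ξ‖ ^ 2 : ℝ) : ℂ)) n‖)
      = ∑ n ∈ Finset.Icc a b, ‖fourierCoeff (fun ξ => ((‖f ξ‖ ^ 2 : ℝ) : ℂ)) n‖ₑ := by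
        rw [ENNReal.ofReal_sum_of_nonneg fun n _ => norm_nonneg _]
        simp only [ofReal_norm]
    _ ≤ ∑ n ∈ Finset.Icc a b, ∑' m, ‖fourierCoeff f m‖ₑ * ‖fourierCoeff f (m + n)‖ₑ :=
        Finset.sum_le_sum fun n _ => enorm_fourierCoeff_normSq_le f n
    _ ≤ DLamZ Λ ((Finset.Icc a b).card : ℝ) * ∑' m, ‖fourierCoeff f m‖ₑ ^ 2 :=
        sum_Icc_tsum_mul_shift_le hsupp a b
    _ = DLamZ Λ ((Finset.Icc a b).card : ℝ) := by rw [hparseval, mul_one]
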